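/- Under the Crusader Agreement hypotheses: (a) Contraquorum echo1_{v0} = T or Contraquorum echo1_{v1} = T; (b) Quorum echo1_{v0} = T or Quorum echo1_{v1} = T; (c) for every p ∈ P, (echo2 p v0) ⊔ (echo2 p v1) ≥ B; and (d) Quorum (fun q ↦ (echo2 q v0) ⊔ (echo2 q v1)) = T. -/
import Mathlib


/-- The three truth values, encoded as `Fin 3` with `0 = F`, `1 = B`, `2 = T`. -/
abbrev TV : Type := Fin 3

/-- false -/ def tF : TV := 0
/-- both/byzantine -/ def tB : TV := 1
/-- true -/ def tT : TV := 2

/-- Negation on `TV`: `neg F = T`, `neg B = B`, `neg T = F`. -/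
def tneg (x : TV) : TV := ⟨2 - x.val, by omega⟩

/-- A semitopology: a collection of subsets containing the whole set and
closed under arbitrary unions. -/
structure Semitopology (P : Type*) where
  opens : Set (Set P)
  univ_mem : Set.univ ∈ opens
  sUnion_mem : ∀ S : Set (Set P), S ⊆ opens → ⋃₀ S ∈ opens

namespace Semitopology

variable {P : Type*}

noncomputable def Everyone (f : P → TV) : TV := ⨅ p, f p

noncomputable def Someone (f : P → TV) : TV := ⨆ p, f p

noncomputable def Quorum (S : Semitopology P) (f : P → TV) : TV :=
  ⨆ O ∈ {O | O ∈ S.opens ∧ O.Nonempty}, ⨅ p ∈ O, f p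

noncomputable def Contraquorum (S : Semitopology P) (f : P → TV) : TV :=
  ⨅ O ∈ {O | O ∈ S.opens ∧ O.Nonempty}, ⨆ p ∈ O, f p

/-- A semitopology is 3-twined when any three nonempty open sets have
nonempty intersection. -/
def ThreeTwined (S : Semitopology P) : Prop :=
  ∀ O₁ O₂ O₃ : Set P, O₁ ∈ S.opens → O₂ ∈ S.opens → O₃ ∈ S.opens →
    O₁.Nonempty → O₂.Nonempty → O₃.Nonempty → (O₁ ∩ O₂ ∩ O₃).Nonempty

end Semitopology

open Semitopology

/-- The three-element value set for Crusader Agreement. -/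
inductive CVal : Type
  | v0 | vhalf | v1
deriving DecidableEq

/-- Exclusive-or on `TV`: `B` if either argument is `B`; otherwise `T` if the
arguments differ and `F` if they agree. -/
def txor (x y : TV) : TV := if x = tB ∨ y = tB then tB else if x = y then tF else tT

lemma tv_le_tT : ∀ x : TV, x ≤ tT := by decide
lemma tv_lt1 : ∀ x : TV, tF < x ↔ tB ≤ x := by decide
lemma tv_lt2 : ∀ x : TV, tB < x ↔ x = tT := by decide
lemma tv_bnt : ∀ x : TV, tB ≤ x → x ≠ tB → x = tT := by decide
lemma tv_ltT : ∀ x : TV, ¬ tT ≤ x → x ≤ tB := by decide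
lemma tv_TnleB : ¬ (tT : TV) ≤ tB := by decide
lemma tv_xor : ∀ x y : TV, x ≠ tB → y ≠ tB → tB ≤ txor x y → x = tT ∨ y = tT := by decide
lemma tv_neg : ∀ x : TV, tB ≤ tneg x → x ≠ tT := by decide
lemma tv_sup : ∀ x y : TV, x ≠ tB → y ≠ tB → tB ≤ x ⊔ y → x ⊔ y = tT := by decide

theorem crusader_contraquorum_input {P : Type*} (S : Semitopology P)
    (input echo1 echo2 output : P → CVal → TV)
    (h3t : S.ThreeTwined)
    (hEcho1Q : ∀ p v, echo1 p v = tT → Someone (fun q => input q v) = tT)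
    (hEcho2Q : ∀ p v, echo2 p v = tT → tB ≤ S.Quorum (fun q => echo1 q v))
    (hOutputQ0 : ∀ p, output p CVal.v0 = tT → tB ≤ S.Quorum (fun q => echo2 q CVal.v0))
    (hOutputQ1 : ∀ p, output p CVal.v1 = tT → tB ≤ S.Quorum (fun q => echo2 q CVal.v1))
    (hOutputQ' : ∀ p, output p CVal.vhalf = tT →
        tB ≤ S.Quorum (fun q => echo1 q CVal.v0) ∧ tB ≤ S.Quorum (fun q => echo1 q CVal.v1))
    (hCorrect : ∃ O ∈ S.opens, O.Nonempty ∧ ∀ q ∈ O, ∀ v : CVal,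
        input q v ≠ tB ∧ echo1 q v ≠ tB ∧ echo2 q v ≠ tB ∧ output q v ≠ tB)
    (hCorrectInput : ∀ p, (∀ v : CVal, input p v ≠ tB) ∨ (∀ v : CVal, input p v = tB))
    (hCorrectEcho1 : ∀ p, (∀ v : CVal, echo1 p v ≠ tB) ∨ (∀ v : CVal, echo1 p v = tB))
    (hCorrectEcho2 : ∀ p, (∀ v : CVal, echo2 p v ≠ tB) ∨ (∀ v : CVal, echo2 p v = tB))
    (hCorrectOutput : ∀ p, (∀ v : CVal, output p v ≠ tB) ∨ (∀ v : CVal, output p v = tB))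
    (hInput : ∀ p, tB ≤ txor (input p CVal.v0) (input p CVal.v1) ⊓ tneg (input p CVal.vhalf))
    (hEcho201 : ∀ p (v v' : CVal), echo2 p v = tT → echo2 p v' = tT → v = v')
    (hEcho1B : ∀ p v, (input p v = tT ∨ S.Contraquorum (fun q => echo1 q v) = tT) →
        tB ≤ echo1 p v)
    (hEcho2B : ∀ p, (∃ v'' : CVal, S.Quorum (fun q => echo1 q v'') = tT) →
        tB ≤ ⨆ v'' : CVal, echo2 p v'')
    (hOutputB : ∀ p v, S.Quorum (fun q => echo2 q v) = tT → tB ≤ output p v)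
    (hOutputB' : ∀ p, S.Quorum (fun q => echo1 q CVal.v0) = tT ∧
        S.Quorum (fun q => echo1 q CVal.v1) = tT → tB ≤ output p CVal.vhalf) :
    (S.Contraquorum (fun q => echo1 q CVal.v0) = tT ∨
      S.Contraquorum (fun q => echo1 q CVal.v1) = tT) ∧
    (S.Quorum (fun q => echo1 q CVal.v0) = tT ∨
      S.Quorum (fun q => echo1 q CVal.v1) = tT) ∧
    (∀ p : P, tB ≤ echo2 p CVal.v0 ⊔ echo2 p CVal.v1) ∧
    S.Quorum (fun q => echo2 q CVal.v0 ⊔ echo2 q CVal.v1) = tT := by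
  obtain ⟨Os, hOsO, hOsNe, hOsCorr⟩ := hCorrect
  -- helper: construct Quorum = tT
  have quorumT : ∀ f : P → TV, ∀ O, O ∈ S.opens → O.Nonempty →
      (∀ p ∈ O, f p = tT) → S.Quorum f = tT := by
    intro f O hO hne h
    refine le_antisymm (tv_le_tT _) ?_
    have h1 : tT ≤ ⨅ p ∈ O, f p := le_iInf₂ fun p hp => (h p hp).ge
    refine le_trans h1 ?_
    exact le_iSup₂ (f := fun O (_ : O ∈ {O | O ∈ S.opens ∧ O.Nonempty}) => ⨅ p ∈ O, f p)
      O ⟨hO, hne⟩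
  -- helper: extract from Quorum
  have quorum_extract : ∀ (a : TV) (f : P → TV), a < S.Quorum f →
      ∃ O, O ∈ S.opens ∧ O.Nonempty ∧ ∀ p ∈ O, a < f p := by
    intro a f h
    rw [Semitopology.Quorum, lt_iSup_iff] at h
    obtain ⟨O, h⟩ := h
    rw [lt_iSup_iff] at h
    obtain ⟨⟨h1, h2⟩, h3⟩ := h
    exact ⟨O, h1, h2, fun p hp => lt_of_lt_of_le h3 (iInf₂_le p hp)⟩
  -- helper: construct Contraquorum = tT
  have cqT : ∀ f : P → TV, (∀ O, O ∈ S.opens → O.Nonempty → ∃ p ∈ O, f p = tT) →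
      S.Contraquorum f = tT := by
    intro f h
    refine le_antisymm (tv_le_tT _) ?_
    rw [Semitopology.Contraquorum]
    refine le_iInf₂ fun O hO => ?_
    obtain ⟨p, hp, hfp⟩ := h O hO.1 hO.2
    exact hfp ▸ le_iSup₂ (f := fun p (_ : p ∈ O) => f p) p hp
  -- helper: extract from Contraquorum ≠ tT
  have cq_extract : ∀ f : P → TV, S.Contraquorum f ≠ tT →
      ∃ O, O ∈ S.opens ∧ O.Nonempty ∧ ∀ p ∈ O, f p ≤ tB := by
    intro f h
    have h2 : ¬ tT ≤ S.Contraquorum f := fun hle => h (le_antisymm (tv_le_tT _) hle)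
    rw [Semitopology.Contraquorum, le_iInf₂_iff] at h2
    push_neg at h2
    obtain ⟨O, hO, hlt⟩ := h2
    refine ⟨O, hO.1, hO.2, fun p hp => ?_⟩
    exact le_trans (le_iSup₂ (f := fun p (_ : p ∈ O) => f p) p hp) (tv_ltT _ (not_le_of_gt hlt))
  -- key: on the correct quorum, echo1 at v0 or v1 is tT
  have key : ∀ q ∈ Os, echo1 q CVal.v0 = tT ∨ echo1 q CVal.v1 = tT := by
    intro q hq
    have hc := hOsCorr q hq
    have hx := le_inf_iff.mp (hInput q)
    rcases tv_xor _ _ (hc CVal.v0).1 (hc CVal.v1).1 hx.1 with h | h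
    · exact Or.inl (tv_bnt _ (hEcho1B q CVal.v0 (Or.inl h)) (hc CVal.v0).2.1)
    · exact Or.inr (tv_bnt _ (hEcho1B q CVal.v1 (Or.inl h)) (hc CVal.v1).2.1)
  have partA : S.Contraquorum (fun q => echo1 q CVal.v0) = tT ∨
      S.Contraquorum (fun q => echo1 q CVal.v1) = tT := by
    by_cases h0 : S.Contraquorum (fun q => echo1 q CVal.v0) = tT
    · exact Or.inl h0
    · right
      obtain ⟨O₀, hO₀, hO₀ne, hO₀le⟩ := cq_extract _ h0
      apply cqT
      intro O hO hOne
      obtain ⟨q, hq⟩ := h3t O O₀ Os hO hO₀ hOsO hOne hO₀ne hOsNe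
      rcases key q hq.2 with h | h
      · exfalso
        have h1 := hO₀le q hq.1.2
        rw [h] at h1
        exact tv_TnleB h1
      · exact ⟨q, hq.1.1, h⟩
  have quorumOfCQ : ∀ v, S.Contraquorum (fun q => echo1 q v) = tT →
      S.Quorum (fun q => echo1 q v) = tT := by
    intro v hcq
    apply quorumT _ Os hOsO hOsNe
    intro q hq
    exact tv_bnt _ (hEcho1B q v (Or.inr hcq)) ((hOsCorr q hq v).2.1)
  have partB := partA.imp (quorumOfCQ _) (quorumOfCQ _)
  have hv : ∃ v'', S.Quorum (fun q => echo1 q v'') = tT :=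
    partB.elim (⟨CVal.v0, ·⟩) (⟨CVal.v1, ·⟩)
  have partC : ∀ p : P, tB ≤ echo2 p CVal.v0 ⊔ echo2 p CVal.v1 := by
    intro p
    have h' : tF < ⨆ v'' : CVal, echo2 p v'' := (tv_lt1 _).mpr (hEcho2B p hv)
    rw [lt_iSup_iff] at h'
    obtain ⟨v'', hv''⟩ := h'
    have hb : tB ≤ echo2 p v'' := (tv_lt1 _).mp hv''
    cases v'' with
    | v0 => exact le_trans hb le_sup_left
    | v1 => exact le_trans hb le_sup_right
    | vhalf =>
      rcases eq_or_ne (echo2 p CVal.vhalf) tB with hB | hnB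
      · rcases hCorrectEcho2 p with hall | hall
        · exact absurd hB (hall _)
        · exact le_trans (le_of_eq (hall CVal.v0).symm) le_sup_left
      · exfalso
        have hT : echo2 p CVal.vhalf = tT := tv_bnt _ hb hnB
        have h2 : tF < S.Quorum (fun q => echo1 q CVal.vhalf) :=
          (tv_lt1 _).mpr (hEcho2Q p CVal.vhalf hT)
        obtain ⟨Oh, hOh, hOhne, hOhb⟩ := quorum_extract tF _ h2
        obtain ⟨q, hqmem⟩ := h3t Oh Os Os hOh hOsO hOsO hOhne hOsNe hOsNe
        have he1 : echo1 q CVal.vhalf = tT :=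
          tv_bnt _ ((tv_lt1 _).mp (hOhb q hqmem.1.1)) ((hOsCorr q hqmem.2 CVal.vhalf).2.1)
        have hsome := hEcho1Q q CVal.vhalf he1
        have hlt : tB < Someone (fun r => input r CVal.vhalf) := by
          rw [hsome]; decide
        rw [Semitopology.Someone, lt_iSup_iff] at hlt
        obtain ⟨r, hr⟩ := hlt
        exact tv_neg _ (le_inf_iff.mp (hInput r)).2 ((tv_lt2 _).mp hr)
  have partD : S.Quorum (fun q => echo2 q CVal.v0 ⊔ echo2 q CVal.v1) = tT := by
    apply quorumT _ Os hOsO hOsNe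
    intro q hq
    exact tv_sup _ _ ((hOsCorr q hq CVal.v0).2.2.1) ((hOsCorr q hq CVal.v1).2.2.1) (partC q)
  exact ⟨partA, partB, partC, partD⟩
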